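/- Let d ≥ 1 and C ≥ 1. Let w : Fin C → EuclideanSpace ℝ (Fin d) and b : Fin C → ℝ define logits g(z) c = ⟪w c, z⟫ + b c. Fix z₀ ∈ EuclideanSpace ℝ (Fin d), a real λ ≥ 0, and a positive semidefinite matrix Σ : Matrix (Fin d) (Fin d) ℝ. Then for every class c : Fin C, the function x ↦ −log (softmax(g(x)) c) is integrable with respect to N(z₀, λ • Σ) and ∫ (−log (softmax(g(x)) c)) dN(z₀, λ • Σ)(x) ≤ log (∑_{c'} exp ((g(z₀) c' − g(z₀) c) + (λ/2) * (w c' − w c)ᵀ Σ (w c' − w c))). -/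

import Mathlib

open MeasureTheory ProbabilityTheory Real
open scoped RealInnerProductSpace BigOperators ENNReal

/-- The positive semidefinite square root of a positive semidefinite matrix (no longer in Mathlib;
restored with its old definition, specialised to real matrices). -/
noncomputable def Matrix.PosSemidef.sqrt {n : Type*} [Fintype n] [DecidableEq n]
    {A : Matrix n n ℝ} (hA : A.PosSemidef) : Matrix n n ℝ :=
  hA.1.eigenvectorUnitary.1 * Matrix.diagonal ((↑) ∘ (√·) ∘ hA.1.eigenvalues) *
    (star hA.1.eigenvectorUnitary : Matrix n n ℝ)

/-- The multivariate Gaussian measure `N(μ, S)` on `EuclideanSpace ℝ (Fin d)` with mean `μ` and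
positive semidefinite covariance matrix `S`, realized as the pushforward of the standard
Gaussian under the affine map `x ↦ μ + √S x`. -/
noncomputable def multiGaussian {d : ℕ} (μ : EuclideanSpace ℝ (Fin d))
    (S : Matrix (Fin d) (Fin d) ℝ) (hS : S.PosSemidef) :
    Measure (EuclideanSpace ℝ (Fin d)) :=
  (MeasureTheory.Measure.pi fun _ : Fin d => gaussianReal 0 1).map
    (fun x => μ + (EuclideanSpace.equiv (Fin d) ℝ).symm (hS.sqrt.mulVec x))

/-- The quadratic form `aᵀ S a = ∑ p q, a p * S p q * a q`. -/
def quadForm {d : ℕ} (S : Matrix (Fin d) (Fin d) ℝ) (a : EuclideanSpace ℝ (Fin d)) : ℝ :=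
  ∑ p, ∑ q, a p * S p q * a q

/-- Softmax of a vector of logits. -/
noncomputable def softmax {C : ℕ} (v : Fin C → ℝ) (c : Fin C) : ℝ :=
  Real.exp (v c) / ∑ c', Real.exp (v c')

/-- A nonnegative scalar multiple of a positive semidefinite matrix is positive semidefinite. -/
theorem posSemidef_smul {d : ℕ} {S : Matrix (Fin d) (Fin d) ℝ} (hS : S.PosSemidef)
    {c : ℝ} (hc : 0 ≤ c) : (c • S).PosSemidef := by
  refine ⟨?_, fun x => ?_⟩
  · unfold Matrix.IsHermitian
    rw [Matrix.conjTranspose_smul, hS.1]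
    simp
  · have h := mul_nonneg hc (hS.2 x)
    simp only [Finsupp.sum, Finset.mul_sum] at h
    refine le_of_le_of_eq h (Finset.sum_congr rfl fun _ _ => Finset.sum_congr rfl fun _ _ => ?_)
    simp only [Matrix.smul_apply, smul_eq_mul]
    ring

/-! Writing `F x = ∑ c', exp (g x c' - g x c)`, the cross-entropy is `-log (softmax (g x) c) = log (F x)`
with `F ≥ 1`, so Jensen's inequality for the concave `log` gives `E[log F] ≤ log E[F]`. Each summand
of `F` is the exponential of an affine functional `⟪a, x⟫ + β`. Since `N(z₀, S)` is the image of the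
standard Gaussian under `x ↦ z₀ + √S x`, its expectation factors into one-dimensional Gaussian moment
generating functions, giving `exp (⟪a, z₀⟫ + β + aᵀ S a / 2)` because `√S √Sᵀ = S`. -/

open Matrix

namespace ProbabilityTheory

lemma integral_exp_dotProduct_pi_gaussianReal {ι : Type*} [Fintype ι] (t : ι → ℝ) :
    ∫ x, exp (t ⬝ᵥ x) ∂(Measure.pi fun _ => gaussianReal 0 1) = exp (t ⬝ᵥ t / 2) := by
  simp_rw [dotProduct, Finset.sum_div, Real.exp_sum]
  rw [integral_fintype_prod_eq_prod (fun i x => exp (t i * x))]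
  refine Finset.prod_congr rfl fun i _ => ?_
  simpa [mgf, sq] using congrFun (mgf_id_gaussianReal (μ := 0) (v := 1)) (t i)

lemma integrable_exp_dotProduct_pi_gaussianReal {ι : Type*} [Fintype ι] (t : ι → ℝ) :
    Integrable (fun x => exp (t ⬝ᵥ x)) (Measure.pi fun _ => gaussianReal 0 1) := by
  simp_rw [dotProduct, Real.exp_sum]
  exact Integrable.fintype_prod fun i => integrable_exp_mul_gaussianReal (t i)

end ProbabilityTheory

namespace Matrix.PosSemidef

variable {n : Type*} [Fintype n] [DecidableEq n] {A : Matrix n n ℝ}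

lemma sqrt_transpose (hA : A.PosSemidef) : hA.sqrtᵀ = hA.sqrt := by
  simp [Matrix.PosSemidef.sqrt, Matrix.mul_assoc, Matrix.star_eq_conjTranspose,
    ← Matrix.conjTranspose_eq_transpose_of_trivial]

lemma sqrt_mul_self (hA : A.PosSemidef) : hA.sqrt * hA.sqrt = A := by
  have hU : (star hA.1.eigenvectorUnitary : Matrix n n ℝ) * hA.1.eigenvectorUnitary = 1 :=
    Unitary.coe_star_mul_self _
  conv_rhs => rw [hA.1.spectral_theorem, Unitary.conjStarAlgAut_apply]
  simp only [Matrix.PosSemidef.sqrt, Matrix.mul_assoc]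
  rw [← Matrix.mul_assoc (star _ : Matrix n n ℝ), hU, Matrix.one_mul,
    ← Matrix.mul_assoc (Matrix.diagonal _), Matrix.diagonal_mul_diagonal]
  congr 3
  funext i
  simp [Real.mul_self_sqrt (hA.eigenvalues_nonneg i)]

end Matrix.PosSemidef

section quadForm

variable {d : ℕ}

lemma quadForm_eq_dotProduct (S : Matrix (Fin d) (Fin d) ℝ) (a : EuclideanSpace ℝ (Fin d)) :
    quadForm S a = a.ofLp ⬝ᵥ (S *ᵥ a.ofLp) := by
  simp only [quadForm, dotProduct, mulVec, Finset.mul_sum]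
  exact Finset.sum_congr rfl fun p _ => Finset.sum_congr rfl fun q _ => by ring

lemma quadForm_smul (r : ℝ) (S : Matrix (Fin d) (Fin d) ℝ) (a : EuclideanSpace ℝ (Fin d)) :
    quadForm (r • S) a = r * quadForm S a := by
  simp only [quadForm_eq_dotProduct, smul_mulVec, dotProduct_smul, smul_eq_mul]

lemma quadForm_eq_dotProduct_vecMul_sqrt {S : Matrix (Fin d) (Fin d) ℝ} (hS : S.PosSemidef)
    (a : EuclideanSpace ℝ (Fin d)) :
    quadForm S a = (a.ofLp ᵥ* hS.sqrt) ⬝ᵥ (a.ofLp ᵥ* hS.sqrt) := by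
  have h : a.ofLp ᵥ* hS.sqrt = hS.sqrt *ᵥ a.ofLp := by
    rw [← vecMul_transpose, hS.sqrt_transpose]
  nth_rw 2 [h]
  rw [← dotProduct_mulVec, mulVec_mulVec, hS.sqrt_mul_self, quadForm_eq_dotProduct]

end quadForm

section multiGaussian

variable {d : ℕ} (μ : EuclideanSpace ℝ (Fin d)) {S : Matrix (Fin d) (Fin d) ℝ} (hS : S.PosSemidef)

instance isProbabilityMeasure_multiGaussian : IsProbabilityMeasure (multiGaussian μ S hS) := by
  unfold multiGaussian
  exact Measure.isProbabilityMeasure_map (Measurable.aemeasurable (by fun_prop))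

lemma exp_inner_affine_add (a : EuclideanSpace ℝ (Fin d)) (β : ℝ) (R : Matrix (Fin d) (Fin d) ℝ)
    (x : Fin d → ℝ) :
    exp (⟪a, μ + (EuclideanSpace.equiv (Fin d) ℝ).symm (R *ᵥ x)⟫ + β)
      = exp (⟪a, μ⟫ + β) * exp ((a.ofLp ᵥ* R) ⬝ᵥ x) := by
  have h : ⟪a, (EuclideanSpace.equiv (Fin d) ℝ).symm (R *ᵥ x)⟫ = (a.ofLp ᵥ* R) ⬝ᵥ x := by
    rw [EuclideanSpace.inner_eq_star_dotProduct, star_trivial, dotProduct_comm]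
    exact dotProduct_mulVec a.ofLp R x
  rw [inner_add_right, h, ← exp_add]
  ring_nf

lemma integrable_exp_inner_add_multiGaussian (a : EuclideanSpace ℝ (Fin d)) (β : ℝ) :
    Integrable (fun z => exp (⟪a, z⟫ + β)) (multiGaussian μ S hS) := by
  rw [multiGaussian, integrable_map_measure (by fun_prop) (Measurable.aemeasurable (by fun_prop))]
  simpa only [Function.comp_def, exp_inner_affine_add] using
    (integrable_exp_dotProduct_pi_gaussianReal (a.ofLp ᵥ* hS.sqrt)).const_mul (exp (⟪a, μ⟫ + β))

lemma integral_exp_inner_add_multiGaussian (a : EuclideanSpace ℝ (Fin d)) (β : ℝ) :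
    ∫ z, exp (⟪a, z⟫ + β) ∂(multiGaussian μ S hS) = exp (⟪a, μ⟫ + β + quadForm S a / 2) := by
  rw [multiGaussian, integral_map (Measurable.aemeasurable (by fun_prop)) (by fun_prop)]
  simp_rw [exp_inner_affine_add]
  rw [integral_const_mul, integral_exp_dotProduct_pi_gaussianReal,
    quadForm_eq_dotProduct_vecMul_sqrt hS, ← exp_add, add_assoc]

end multiGaussian

section Jensen

variable {α : Type*} [MeasurableSpace α] {μ : Measure α} {f : α → ℝ}

lemma integrable_log_of_one_le (hf : Integrable f μ) (h1 : ∀ᵐ x ∂μ, 1 ≤ f x) :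
    Integrable (fun x => log (f x)) μ := by
  refine hf.mono' (measurable_log.comp_aemeasurable hf.aemeasurable).aestronglyMeasurable ?_
  filter_upwards [h1] with x hx
  rw [norm_of_nonneg (log_nonneg hx)]
  linarith [log_le_sub_one_of_pos (zero_lt_one.trans_le hx)]

lemma integral_log_le_log_integral [IsProbabilityMeasure μ] (hf : Integrable f μ)
    (h1 : ∀ᵐ x ∂μ, 1 ≤ f x) : ∫ x, log (f x) ∂μ ≤ log (∫ x, f x ∂μ) := by
  have hsub : Set.Ici (1 : ℝ) ⊆ Set.Ioi 0 := fun _ hx => Set.mem_Ioi.2 (zero_lt_one.trans_le hx)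
  exact (strictConcaveOn_log_Ioi.concaveOn.subset hsub (convex_Ici 1)).le_map_integral
    (continuousOn_log.mono fun _ hx => (hsub hx).ne') isClosed_Ici h1 hf
    (integrable_log_of_one_le hf h1)

end Jensen

lemma one_le_sum_exp_sub {ι : Type*} [Fintype ι] (v : ι → ℝ) (i : ι) :
    1 ≤ ∑ j, exp (v j - v i) := by
  simpa using Finset.single_le_sum (fun j _ => (exp_pos (v j - v i)).le) (Finset.mem_univ i)

lemma neg_log_softmax {C : ℕ} (v : Fin C → ℝ) (c : Fin C) :
    -log (softmax v c) = log (∑ c', exp (v c' - v c)) := by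
  simp_rw [← log_inv, softmax, inv_div, Finset.sum_div, exp_sub]

theorem single_feature_bound_general (d C : ℕ)
    (w : Fin C → EuclideanSpace ℝ (Fin d)) (b : Fin C → ℝ)
    (g : EuclideanSpace ℝ (Fin d) → Fin C → ℝ)
    (hg : ∀ z c, g z c = ⟪w c, z⟫ + b c)
    (z₀ : EuclideanSpace ℝ (Fin d)) (lam : ℝ) (hlam : 0 ≤ lam)
    (Sig : Matrix (Fin d) (Fin d) ℝ) (hSig : Sig.PosSemidef) (c : Fin C) :
    Integrable (fun x => -Real.log (softmax (g x) c))
      (multiGaussian z₀ (lam • Sig) (posSemidef_smul hSig hlam)) ∧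
    ∫ x, -Real.log (softmax (g x) c)
        ∂(multiGaussian z₀ (lam • Sig) (posSemidef_smul hSig hlam))
      ≤ Real.log (∑ c', Real.exp ((g z₀ c' - g z₀ c)
          + lam / 2 * quadForm Sig (w c' - w c))) := by
  set μ := multiGaussian z₀ (lam • Sig) (posSemidef_smul hSig hlam)
  have hlogit : ∀ z c', g z c' - g z c = ⟪w c' - w c, z⟫ + (b c' - b c) := by
    intro z c'
    rw [hg, hg, inner_sub_left]
    ring
  set F := fun z => ∑ c', exp (g z c' - g z c)
  have hF1 : ∀ᵐ z ∂μ, 1 ≤ F z := ae_of_all _ fun z => one_le_sum_exp_sub (g z) c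
  have hFint : Integrable F μ := by
    simp only [F, hlogit]
    exact integrable_finsetSum _ fun c' _ => integrable_exp_inner_add_multiGaussian _ _ _ _
  have hEF : ∫ z, F z ∂μ
      = ∑ c', exp ((g z₀ c' - g z₀ c) + lam / 2 * quadForm Sig (w c' - w c)) := by
    simp only [F, hlogit]
    rw [integral_finsetSum _ fun c' _ => integrable_exp_inner_add_multiGaussian _ _ _ _]
    refine Finset.sum_congr rfl fun c' _ => ?_
    rw [integral_exp_inner_add_multiGaussian, quadForm_smul]
    ring_nf
  simp_rw [neg_log_softmax]
  exact ⟨integrable_log_of_one_le hFint hF1, hEF ▸ integral_log_le_log_integral hFint hF1⟩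

/-- Single-feature bound inside Proposition 1: the expected cross-entropy of the softmax over one
Gaussian-augmented feature is bounded by the ISDA-type closed form, and the integrand is
integrable. -/
theorem single_feature_bound (d C : ℕ) (hd : 1 ≤ d) (hC : 1 ≤ C)
    (w : Fin C → EuclideanSpace ℝ (Fin d)) (b : Fin C → ℝ)
    (g : EuclideanSpace ℝ (Fin d) → Fin C → ℝ)
    (hg : ∀ z c, g z c = ⟪w c, z⟫ + b c)
    (z₀ : EuclideanSpace ℝ (Fin d)) (lam : ℝ) (hlam : 0 ≤ lam)
    (Sig : Matrix (Fin d) (Fin d) ℝ) (hSig : Sig.PosSemidef) (c : Fin C) :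
    Integrable (fun x => -Real.log (softmax (g x) c))
      (multiGaussian z₀ (lam • Sig) (posSemidef_smul hSig hlam)) ∧
    ∫ x, -Real.log (softmax (g x) c)
        ∂(multiGaussian z₀ (lam • Sig) (posSemidef_smul hSig hlam))
      ≤ Real.log (∑ c', Real.exp ((g z₀ c' - g z₀ c)
          + lam / 2 * quadForm Sig (w c' - w c))) :=
  single_feature_bound_general d C w b g hg z₀ lam hlam Sig hSig c
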